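/- arXiv:2007.09773 — 6 statements merged into one kernel-verified Lean document; each statement's English description precedes it below -/
import Mathlib

section
/- Let P be a finite set of points in the plane and let s, t be two points. The Voronoi cells of s and t are adjacent in the Voronoi diagram of P ∪ {s,t} (i.e., their cells share a boundary point) if and only if there exists a closed disk containing s and t on its boundary or interior that contains no point of P in its interior. -/
open Metric

/-- Voronoi cell of `q` with respect to the set of sites `Q`. -/
def vorCell (Q : Set (EuclideanSpace ℝ (Fin 2))) (q : EuclideanSpace ℝ (Fin 2)) :
    Set (EuclideanSpace ℝ (Fin 2)) :=
  {x | ∀ p ∈ Q, dist x q ≤ dist x p}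

private lemma aux_pt (P : Finset (EuclideanSpace ℝ (Fin 2))) (s t c : EuclideanSpace ℝ (Fin 2))
    (r : ℝ) (hs : dist s c ≤ r) (hP : ∀ p ∈ P, p ∉ ball c r) (hst : dist c t ≤ dist c s) :
    ∃ x, dist x s = dist x t ∧ ∀ p ∈ P, dist x s ≤ dist x p := by
  set g : ℝ → EuclideanSpace ℝ (Fin 2) := fun l => c + l • (s - c) with hg
  have hgs : ∀ l ∈ Set.Icc (0:ℝ) 1, dist (g l) s = (1 - l) * dist c s := by
    intro l hl
    have : g l - s = (1 - l) • (c - s) := by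
      simp only [hg]; module
    rw [dist_eq_norm, this, norm_smul, Real.norm_eq_abs,
      abs_of_nonneg (by linarith [hl.2]), ← dist_eq_norm]
  have hgc : ∀ l ∈ Set.Icc (0:ℝ) 1, dist (g l) c = l * dist c s := by
    intro l hl
    have : g l - c = l • (s - c) := by simp only [hg]; abel
    rw [dist_eq_norm, this, norm_smul, Real.norm_eq_abs, abs_of_nonneg hl.1,
      ← dist_eq_norm, dist_comm s c]
  have hcont : ContinuousOn (fun l => dist (g l) s - dist (g l) t) (Set.Icc 0 1) := by
    apply Continuous.continuousOn
    have : Continuous g := by continuity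
    exact (this.dist continuous_const).sub (this.dist continuous_const)
  have h0 : (0:ℝ) ∈ Set.Icc (dist (g 1) s - dist (g 1) t) (dist (g 0) s - dist (g 0) t) := by
    constructor
    · have : g 1 = s := by simp only [hg]; module
      rw [this]; simp [dist_nonneg]
    · have : g 0 = c := by simp [hg]
      rw [this]; rw [dist_comm c s] at hst ⊢ <;> linarith [dist_comm s c ▸ hst]
  obtain ⟨l, hl, hfl⟩ := intermediate_value_Icc' (by norm_num : (0:ℝ) ≤ 1) hcont h0
  have hfl' : dist (g l) s - dist (g l) t = 0 := hfl
  refine ⟨g l, by linarith, ?_⟩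
  intro p hp
  have hpc : r ≤ dist p c := by
    have := hP p hp; simpa [mem_ball, not_lt] using this
  have h1 := hgs l hl
  have h2 := hgc l hl
  have h3 : dist p c ≤ dist p (g l) + dist (g l) c := dist_triangle _ _ _
  have h4 : dist c s ≤ r := by rw [dist_comm]; exact hs
  rw [dist_comm (g l) p]
  nlinarith [hl.1, hl.2, dist_nonneg (x := p) (y := g l)]

/-- The cells of `s` and `t` are adjacent in the Voronoi diagram of `P ∪ {s,t}` iff
there is a closed disk containing `s` and `t` with no point of `P` in its interior. -/
theorem stmt0 (P : Finset (EuclideanSpace ℝ (Fin 2))) (s t : EuclideanSpace ℝ (Fin 2)) :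
    (vorCell (↑P ∪ {s, t}) s ∩ vorCell (↑P ∪ {s, t}) t).Nonempty ↔
      ∃ (c : EuclideanSpace ℝ (Fin 2)) (r : ℝ), s ∈ closedBall c r ∧ t ∈ closedBall c r ∧
        ∀ p ∈ P, p ∉ ball c r := by
  constructor
  · rintro ⟨x, hxs, hxt⟩
    refine ⟨x, dist x s, by simp [dist_comm], ?_, ?_⟩
    · have h1 : dist x t ≤ dist x s := hxt s (by simp)
      simp only [mem_closedBall, dist_comm t x]; exact h1
    · intro p hp
      have := hxs p (Or.inl (by exact_mod_cast hp))
      simp only [mem_ball, not_lt, dist_comm p x]; linarith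
  · rintro ⟨c, r, hs, ht, hP⟩
    rw [mem_closedBall] at hs ht
    have key : ∃ x, dist x s = dist x t ∧ ∀ p ∈ P, dist x s ≤ dist x p := by
      rcases le_total (dist c t) (dist c s) with h | h
      · exact aux_pt P s t c r hs hP h
      · obtain ⟨x, h1, h2⟩ := aux_pt P t s c r ht hP h
        exact ⟨x, h1.symm, fun p hp => h1 ▸ h2 p hp⟩
    obtain ⟨x, hx1, hx2⟩ := key
    refine ⟨x, ?_, ?_⟩ <;> intro p hp <;>
      rcases hp with hp | hp | hp
    · exact hx2 p (by exact_mod_cast hp)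
    · simp_all
    · simp_all
    · rw [← hx1]; exact hx2 p (by exact_mod_cast hp)
    · simp_all
    · simp_all
end

section
/- Monotonicity of reachable regions: with P finite, s ∈ P, define R₀ = cell of s in P, and inductively U_{i+1} = ⋃_{v ∈ R_i} closedBall(v, d(v, P \ R_i)) and R_{i+1} = {x ∈ ℝ² : d(x, U_{i+1}) ≤ d(x, P \ U_{i+1})}. Then R_i ⊆ R_{i+1} for all i, and U_i ⊆ U_{i+1}. -/
open Metric

/-- `(reach P s i).1` is the `i`-th occupied region `Uᵢ` and `(reach P s i).2` is the `i`-th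
reachable region `Rᵢ` (with `R₀` the Voronoi cell of `s` in `P`). -/
noncomputable def reach (P : Finset (EuclideanSpace ℝ (Fin 2))) (s : EuclideanSpace ℝ (Fin 2)) :
    ℕ → Set (EuclideanSpace ℝ (Fin 2)) × Set (EuclideanSpace ℝ (Fin 2))
  | 0 => (∅, {x | ∀ p ∈ P, dist x s ≤ dist x p})
  | (i + 1) =>
    let R := (reach P s i).2
    let U := ⋃ v ∈ R, closedBall v (infDist v ((↑P : Set (EuclideanSpace ℝ (Fin 2))) \ R))
    (U, {x | infDist x U ≤ infDist x ((↑P : Set (EuclideanSpace ℝ (Fin 2))) \ U)})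

lemma reach_RU (P : Finset (EuclideanSpace ℝ (Fin 2))) (s : EuclideanSpace ℝ (Fin 2)) (j : ℕ) :
    (reach P s j).2 ⊆ (reach P s (j + 1)).1 := by
  intro v hv
  show v ∈ ⋃ w ∈ (reach P s j).2, closedBall w _
  exact Set.mem_biUnion hv (mem_closedBall_self (infDist_nonneg))

lemma reach_UR (P : Finset (EuclideanSpace ℝ (Fin 2))) (s : EuclideanSpace ℝ (Fin 2)) (j : ℕ) :
    (reach P s (j + 1)).1 ⊆ (reach P s (j + 1)).2 := by
  intro x hx
  show infDist x (reach P s (j + 1)).1 ≤ _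
  rw [infDist_zero_of_mem hx]
  exact infDist_nonneg

/-- Monotonicity of the reachable and occupied regions: `Rᵢ ⊆ Rᵢ₊₁` and `Uᵢ₊₁ ⊆ Uᵢ₊₂`. -/
theorem stmt5 (P : Finset (EuclideanSpace ℝ (Fin 2))) (s : EuclideanSpace ℝ (Fin 2))
    (hs : s ∈ P) (i : ℕ) :
    (reach P s i).2 ⊆ (reach P s (i + 1)).2 ∧ (reach P s (i + 1)).1 ⊆ (reach P s (i + 2)).1 := by
  exact ⟨(reach_RU P s i).trans (reach_UR P s i),
    (reach_UR P s i).trans (reach_RU P s (i + 1))⟩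
end

section
/- Chain characterization of safe paths: let P be a finite set in ℝ² and s, t ∈ P. Suppose q₀ = s, q₁, ..., q_k = t are points such that for each i there is a closed disk containing q_i and q_{i+1} whose interior contains no point of P ∪ {q₀,...,q_k} other than possibly q_i and q_{i+1}. Then in the Voronoi diagram of P ∪ {q₀,...,q_k}, the union of the Voronoi cells of q₀,...,q_k is a connected set. -/
/-!
Each Voronoi cell is star-shaped about its own site, hence connected. For consecutive points
`a, b` of the chain with an empty witness disk `closedBall c r`, walk from `c` towards the farther
of `a, b` until the two distances agree: at that point `x` the ball about `x` through `a` and `b`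
lies inside the witness disk, so no other site is closer to `x`, and `x` lies in both cells.
Consecutive cells therefore meet, and the union of the chain of cells is connected.
-/

open Metric

theorem IsConnected.iUnion_fin_of_chain {X : Type*} [TopologicalSpace X] {k : ℕ}
    {s : Fin (k + 1) → Set X} (H : ∀ i, IsConnected (s i))
    (K : ∀ i : Fin k, (s i.castSucc ∩ s i.succ).Nonempty) : IsConnected (⋃ i, s i) := by
  refine IsConnected.iUnion_of_chain H fun i => ?_
  induction i using Fin.lastCases with
  | last => simpa using (H (Fin.last k)).nonempty
  | cast i => simpa using K i

section NormedSpace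

variable {V : Type*} [SeminormedAddCommGroup V] [NormedSpace ℝ V]

theorem starConvex_setOf_forall_dist_le (Q : Set V) (a : V) :
    StarConvex ℝ a {x | ∀ p ∈ Q, dist x a ≤ dist x p} := by
  refine starConvex_iff_segment_subset.2 fun x hx z hz p hp => ?_
  have hseg := dist_add_dist_of_mem_segment hz
  have := hx p hp
  have := dist_triangle x z p
  rw [dist_comm a z, dist_comm z x] at hseg
  rw [dist_comm x a] at *
  linarith

theorem exists_mem_segment_dist_eq_dist {a b c : V} (h : dist c a ≤ dist c b) :
    ∃ x ∈ segment ℝ c b, dist x a = dist x b :=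
  (convex_segment c b).isPreconnected.intermediate_value₂ (left_mem_segment ℝ c b)
    (right_mem_segment ℝ c b) (continuous_id.dist continuous_const).continuousOn
    (continuous_id.dist continuous_const).continuousOn h (by simp)

theorem exists_dist_eq_dist_le_of_mem_closedBall {a b c : V} {r : ℝ}
    (ha : a ∈ closedBall c r) (hb : b ∈ closedBall c r) :
    ∃ x, dist x a = dist x b ∧ ∀ p ∉ ball c r, dist x a ≤ dist x p := by
  wlog hab : dist c a ≤ dist c b generalizing a b
  · obtain ⟨x, hx, hxp⟩ := this hb ha (le_of_not_ge hab)
    exact ⟨x, hx.symm, fun p hp => hx ▸ hxp p hp⟩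
  obtain ⟨x, hx, hxab⟩ := exists_mem_segment_dist_eq_dist hab
  refine ⟨x, hxab, fun p hp => ?_⟩
  have hseg := dist_add_dist_of_mem_segment hx
  have := dist_triangle c x p
  rw [mem_closedBall, dist_comm] at hb
  rw [mem_ball, not_lt, dist_comm] at hp
  linarith

end NormedSpace

local notation "E" => EuclideanSpace ℝ (Fin 2)

theorem isConnected_vorCell (Q : Set E) (a : E) : IsConnected (vorCell Q a) :=
  ((starConvex_setOf_forall_dist_le Q a).isPathConnected
    fun p _ => by simp).isConnected

theorem vorCell_inter_nonempty_of_ball {Q : Set E} {a b c : E} {r : ℝ}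
    (ha : a ∈ closedBall c r) (hb : b ∈ closedBall c r)
    (hQ : ∀ p ∈ Q, p ≠ a → p ≠ b → p ∉ ball c r) :
    (vorCell Q a ∩ vorCell Q b).Nonempty := by
  obtain ⟨x, hxab, hx⟩ := exists_dist_eq_dist_le_of_mem_closedBall ha hb
  have hxa : x ∈ vorCell Q a := fun p hp => by
    by_cases hpa : p = a
    · rw [hpa]
    by_cases hpb : p = b
    · rw [hpb, hxab]
    exact hx p (hQ p hp hpa hpb)
  exact ⟨x, hxa, fun p hp => hxab ▸ hxa p hp⟩

theorem stmt9_general (P : Finset (EuclideanSpace ℝ (Fin 2)))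
    (k : ℕ) (q : Fin (k + 1) → EuclideanSpace ℝ (Fin 2))
    (hchain : ∀ i : Fin k, ∃ (c : EuclideanSpace ℝ (Fin 2)) (r : ℝ),
      q i.castSucc ∈ closedBall c r ∧ q i.succ ∈ closedBall c r ∧
      ∀ y ∈ (↑P : Set (EuclideanSpace ℝ (Fin 2))) ∪ Set.range q,
        y ≠ q i.castSucc → y ≠ q i.succ → y ∉ ball c r) :
    IsConnected (⋃ i : Fin (k + 1),
      vorCell ((↑P : Set (EuclideanSpace ℝ (Fin 2))) ∪ Set.range q) (q i)) := by
  refine IsConnected.iUnion_fin_of_chain (fun i => isConnected_vorCell _ _) fun i => ?_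
  obtain ⟨c, r, ha, hb, hempty⟩ := hchain i
  exact vorCell_inter_nonempty_of_ball ha hb hempty

/-- Chain characterization of safe paths: if consecutive points of the chain `q₀,…,q_k`
admit empty witness disks, then the union of their Voronoi cells in the diagram of
`P ∪ {q₀,…,q_k}` is connected. -/
theorem stmt9 (P : Finset (EuclideanSpace ℝ (Fin 2))) (s t : EuclideanSpace ℝ (Fin 2))
    (hs : s ∈ P) (ht : t ∈ P) (k : ℕ) (q : Fin (k + 1) → EuclideanSpace ℝ (Fin 2))
    (hq0 : q 0 = s) (hqk : q (Fin.last k) = t)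
    (hchain : ∀ i : Fin k, ∃ (c : EuclideanSpace ℝ (Fin 2)) (r : ℝ),
      q i.castSucc ∈ closedBall c r ∧ q i.succ ∈ closedBall c r ∧
      ∀ y ∈ (↑P : Set (EuclideanSpace ℝ (Fin 2))) ∪ Set.range q,
        y ≠ q i.castSucc → y ≠ q i.succ → y ∉ ball c r) :
    IsConnected (⋃ i : Fin (k + 1),
      vorCell ((↑P : Set (EuclideanSpace ℝ (Fin 2))) ∪ Set.range q) (q i)) :=
  stmt9_general P k q hchain
end

section
/- Let P be finite, s ∈ P, R₀ = cell(s,P), and U₁ = ⋃_{v ∈ R₀} closedBall(v, dist v s). Then for any point q, if cell(q, P ∪ {q}) meets cell(s, P ∪ {q}), then q ∈ U₁. -/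
open Metric

/-- Necessary condition for one-step reachability: if the Voronoi cells of an inserted site `q`
and of `s` in the diagram of `P ∪ {q}` intersect, then `q` lies in
`U₁ = ⋃_{v ∈ cell(s,P)} closedBall v (dist v s)`. -/
theorem stmt11 (P : Finset (EuclideanSpace ℝ (Fin 2))) (s : EuclideanSpace ℝ (Fin 2))
    (hs : s ∈ P) (q : EuclideanSpace ℝ (Fin 2))
    (hadj : (vorCell (insert q (↑P : Set (EuclideanSpace ℝ (Fin 2)))) q ∩
      vorCell (insert q (↑P : Set (EuclideanSpace ℝ (Fin 2)))) s).Nonempty) :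
    q ∈ ⋃ v ∈ vorCell (↑P) s, closedBall v (dist v s) := by
  obtain ⟨v, hvq, hvs⟩ := hadj
  have hvcell : v ∈ vorCell (↑P) s := fun p hp => hvs p (Set.mem_insert_iff.2 (Or.inr hp))
  refine Set.mem_biUnion hvcell ?_
  have h1 : dist v q ≤ dist v s := hvq s (Set.mem_insert_iff.2 (Or.inr hs))
  simpa [mem_closedBall, dist_comm] using h1
end

section
/- Union of disks centered on a convex region: if R ⊆ ℝ² is the (convex) Voronoi cell of s in a finite set P, and R is compact with nonempty interior and s lies in its interior, then ⋃_{v ∈ R} closedBall(v, dist v s) = ⋃_{v ∈ frontier R} closedBall(v, dist v s); i.e., disks centered at interior points are covered by disks centered at boundary points. -/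
open Metric

lemma key (R : Set (EuclideanSpace ℝ (Fin 2))) (s : EuclideanSpace ℝ (Fin 2))
    (hcpt : IsCompact R) (v : EuclideanSpace ℝ (Fin 2)) (hv : v ∈ R) (hvs : v ≠ s) :
    ∃ w ∈ frontier R, closedBall v (dist v s) ⊆ closedBall w (dist w s) := by
  set f : ℝ → EuclideanSpace ℝ (Fin 2) := fun t => v + t • (v - s) with hf
  have hfc : Continuous f := by fun_prop
  set T : Set ℝ := {t | 0 ≤ t ∧ f t ∈ R} with hT
  have hvsn : (0:ℝ) < ‖v - s‖ := by
    rw [norm_pos_iff, sub_ne_zero]; exact hvs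
  obtain ⟨C, hC⟩ := hcpt.isBounded.exists_norm_le
  have hbdd : BddAbove T := by
    refine ⟨(C + ‖v‖) / ‖v - s‖, fun t ht => ?_⟩
    obtain ⟨ht0, htR⟩ := ht
    have h1 : ‖f t‖ ≤ C := hC _ htR
    have h2 : ‖t • (v - s)‖ - ‖v‖ ≤ ‖f t‖ := by
      have : ‖t • (v - s)‖ = ‖f t - v‖ := by simp [hf]
      rw [this]
      have := norm_sub_norm_le (f t - v) (-v)
      simp at this
      linarith [norm_sub_le (f t - v) (-v), norm_le_norm_add_norm_sub' (f t) v]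
    have h3 : ‖t • (v - s)‖ = t * ‖v - s‖ := by
      rw [norm_smul, Real.norm_eq_abs, abs_of_nonneg ht0]
    rw [le_div_iff₀ hvsn]
    linarith
  have hTne : T.Nonempty := ⟨0, le_refl 0, by simpa [hf] using hv⟩
  have hTclosed : IsClosed T := by
    have : T = Set.Ici (0:ℝ) ∩ f ⁻¹' R := by
      ext t; simp [hT, Set.mem_Ici, and_comm]
    rw [this]
    exact isClosed_Ici.inter (hcpt.isClosed.preimage hfc)
  set t0 : ℝ := sSup T with ht0def
  have ht0T : t0 ∈ T := hTclosed.csSup_mem hTne hbdd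
  obtain ⟨ht00, ht0R⟩ := ht0T
  refine ⟨f t0, ?_, ?_⟩
  · rw [frontier_eq_closure_inter_closure]
    constructor
    · exact subset_closure ht0R
    · have htend : Filter.Tendsto f (nhdsWithin t0 (Set.Ioi t0)) (nhds (f t0)) :=
        (hfc.tendsto t0).mono_left nhdsWithin_le_nhds
      refine mem_closure_of_tendsto htend ?_
      filter_upwards [self_mem_nhdsWithin] with t ht
      intro htR
      have : t ∈ T := ⟨le_trans ht00 (le_of_lt ht), htR⟩
      exact absurd (le_csSup hbdd this) (not_le.mpr ht)
  · intro x hx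
    rw [mem_closedBall] at hx ⊢
    have hdvw : dist v (f t0) = t0 * ‖v - s‖ := by
      rw [dist_eq_norm]
      simp only [hf]
      rw [show v - (v + t0 • (v - s)) = -(t0 • (v - s)) by abel, norm_neg, norm_smul,
        Real.norm_eq_abs, abs_of_nonneg ht00]
    have hdws : dist (f t0) s = (1 + t0) * ‖v - s‖ := by
      rw [dist_eq_norm]
      simp only [hf]
      rw [show v + t0 • (v - s) - s = (1 + t0) • (v - s) by rw [add_smul, one_smul]; abel,
        norm_smul, Real.norm_eq_abs, abs_of_nonneg (by linarith)]
    have hdvs : dist v s = ‖v - s‖ := dist_eq_norm v s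
    calc dist x (f t0) ≤ dist x v + dist v (f t0) := dist_triangle x v (f t0)
      _ ≤ ‖v - s‖ + t0 * ‖v - s‖ := by rw [hdvw]; linarith [hx, hdvs.symm ▸ hx]
      _ = (1 + t0) * ‖v - s‖ := by ring
      _ = dist (f t0) s := hdws.symm

/-- Disks centered at interior points of the Voronoi cell of `s` are covered by disks centered
at boundary points: the union over the cell equals the union over its frontier. -/
theorem stmt12 (P : Finset (EuclideanSpace ℝ (Fin 2))) (s : EuclideanSpace ℝ (Fin 2))
    (hs : s ∈ P) (hcpt : IsCompact (vorCell (↑P) s)) (hint : s ∈ interior (vorCell (↑P) s)) :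
    (⋃ v ∈ vorCell (↑P) s, closedBall v (dist v s)) =
      ⋃ v ∈ frontier (vorCell (↑P) s), closedBall v (dist v s) := by
  set R := vorCell (↑P) s with hR
  apply Set.Subset.antisymm
  · rintro x hx
    simp only [Set.mem_iUnion, exists_prop] at hx ⊢
    obtain ⟨v, hv, hxv⟩ := hx
    by_cases hvs : v = s
    · -- x = s, pick any point of R other than s
      subst hvs
      rw [mem_closedBall, dist_self] at hxv
      have hxs : x = v := by
        have := dist_le_zero.mp hxv
        exact this
      obtain ⟨ε, hε, hball⟩ := Metric.isOpen_iff.mp isOpen_interior v hint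
      set v' : EuclideanSpace ℝ (Fin 2) := v + (ε/2) • EuclideanSpace.single 0 1 with hv'
      have hv'v : dist v' v = ε/2 := by
        rw [dist_eq_norm, hv']
        simp [norm_smul, abs_of_pos hε, EuclideanSpace.norm_single]
      have hv'R : v' ∈ R := interior_subset (hball (by rw [mem_ball, hv'v]; linarith))
      have hv'ne : v' ≠ v := by
        intro h
        rw [h, dist_self] at hv'v; linarith
      obtain ⟨w, hw, hsub⟩ := key R v hcpt v' hv'R hv'ne
      refine ⟨w, hw, hsub ?_⟩
      rw [hxs, mem_closedBall, dist_comm]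
    · obtain ⟨w, hw, hsub⟩ := key R s hcpt v hv hvs
      exact ⟨w, hw, hsub hxv⟩
  · refine Set.iUnion₂_subset fun w hw => ?_
    have hwR : w ∈ R := by
      have := hw.1
      rwa [hcpt.isClosed.closure_eq] at this
    exact Set.subset_iUnion₂ (s := fun v _ => closedBall v (dist v s)) w hwR
end

section
/- In the hexagonal lattice, the Voronoi cell of each lattice point is a regular hexagon, and the union ⋃_{v ∈ R₀} closedBall(v, dist(v, s)), where R₀ is the hexagonal cell of s, equals the union of the six disks centered at the vertices of the hexagon (each of radius equal to the circumradius of the hexagon). -/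
/-! For `v` in the cell `R₀`, a point `x` lies in `closedBall v ‖v‖` iff `‖x‖² ≤ 2⟪v, x⟫`.
This is linear in `v`, so it suffices that for every `x` some vertex `w` maximizes `⟪·, x⟫`
over `R₀`. Write `x` as a nonnegative combination of two consecutive neighbours `p_k, p_{k+1}`
(they span a 60° cone, and six such cones cover the plane): every `v ∈ R₀` has
`⟪v, p_k⟫, ⟪v, p_{k+1}⟫ ≤ 1/2`, with equality for the vertex `w_k` between them. -/

open Metric Real

/-- The six hexagonal-lattice neighbors of the origin, at distance `1`, angles `60°·k`. -/
noncomputable def hexNbr (i : Fin 6) : EuclideanSpace ℝ (Fin 2) :=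
  !₂[Real.cos (i * (π / 3)), Real.sin (i * (π / 3))]

/-- The six vertices of the hexagonal Voronoi cell of the origin, at distance `1/√3`,
angles `30° + 60°·k`. -/
noncomputable def hexVtx (i : Fin 6) : EuclideanSpace ℝ (Fin 2) :=
  (1 / Real.sqrt 3) • (!₂[Real.cos (π / 6 + i * (π / 3)), Real.sin (π / 6 + i * (π / 3))] :
    EuclideanSpace ℝ (Fin 2))

open scoped RealInnerProductSpace

section InnerProductSpace

variable {E : Type*} [NormedAddCommGroup E] [InnerProductSpace ℝ E]

theorem mem_closedBall_dist_zero_iff {v x : E} :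
    x ∈ closedBall v (dist v 0) ↔ ‖x‖ ^ 2 ≤ 2 * ⟪v, x⟫ := by
  rw [mem_closedBall, dist_eq_norm, dist_zero_right, ← sq_le_sq₀ (norm_nonneg _) (norm_nonneg _),
    norm_sub_sq_real, real_inner_comm]
  constructor <;> intro h <;> linarith

theorem dist_zero_le_dist_iff {x p : E} : dist x 0 ≤ dist x p ↔ 2 * ⟪x, p⟫ ≤ ‖p‖ ^ 2 := by
  rw [dist_zero_right, dist_eq_norm, ← sq_le_sq₀ (norm_nonneg _) (norm_nonneg _),
    norm_sub_sq_real]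
  constructor <;> intro h <;> linarith

theorem inner_le_inner_of_eq_smul_add_smul {v w p q y : E} {α β c : ℝ} (hα : 0 ≤ α) (hβ : 0 ≤ β)
    (hy : y = α • p + β • q) (hvp : ⟪v, p⟫ ≤ c) (hvq : ⟪v, q⟫ ≤ c) (hwp : ⟪w, p⟫ = c)
    (hwq : ⟪w, q⟫ = c) : ⟪v, y⟫ ≤ ⟪w, y⟫ := by
  subst hy
  simp only [inner_add_right, real_inner_smul_right, hwp, hwq]
  gcongr

theorem biUnion_closedBall_dist_zero_eq_iUnion {ι : Type*} {R : Set E} {w : ι → E}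
    (hw : ∀ i, w i ∈ R) (hsupp : ∀ x, ∃ i, ∀ v ∈ R, ⟪v, x⟫ ≤ ⟪w i, x⟫) :
    ⋃ v ∈ R, closedBall v (dist v 0) = ⋃ i, closedBall (w i) (dist (w i) 0) := by
  ext x
  simp only [Set.mem_iUnion, mem_closedBall_dist_zero_iff, exists_prop]
  constructor
  · rintro ⟨v, hv, hx⟩
    obtain ⟨i, hi⟩ := hsupp x
    exact ⟨i, hx.trans (by gcongr; exact hi v hv)⟩
  · rintro ⟨i, hx⟩
    exact ⟨w i, hw i, hx⟩

end InnerProductSpace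

noncomputable def unitVec (θ : ℝ) : EuclideanSpace ℝ (Fin 2) := !₂[cos θ, sin θ]

theorem inner_unitVec (a b : ℝ) : ⟪unitVec a, unitVec b⟫ = cos (a - b) := by
  simp only [unitVec, PiLp.inner_apply, RCLike.inner_apply, ringHom_apply, Fin.sum_univ_two,
    Fin.isValue, Matrix.cons_val_zero, Matrix.cons_val_one, Matrix.cons_val_fin_one, cos_sub]
  ring

theorem norm_unitVec (θ : ℝ) : ‖unitVec θ‖ = 1 := by
  rw [norm_eq_sqrt_real_inner, inner_unitVec, sub_self, cos_zero, sqrt_one]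

theorem unitVec_add_nat_mul_two_pi (θ : ℝ) (n : ℕ) : unitVec (θ + n * (2 * π)) = unitVec θ := by
  simp only [unitVec, cos_add_nat_mul_two_pi, sin_add_nat_mul_two_pi]

theorem sin_sub_smul_unitVec (a b θ : ℝ) :
    sin (b - a) • unitVec θ = sin (b - θ) • unitVec a + sin (θ - a) • unitVec b := by
  ext i
  fin_cases i <;>
    simp only [unitVec, sin_sub, Fin.zero_eta, Fin.mk_one, Fin.isValue, PiLp.smul_apply,
      PiLp.add_apply, smul_eq_mul, Matrix.cons_val_zero, Matrix.cons_val_one,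
      Matrix.cons_val_fin_one] <;>
    ring

theorem exists_eq_norm_smul_unitVec (x : EuclideanSpace ℝ (Fin 2)) :
    ∃ θ, 0 ≤ θ ∧ x = ‖x‖ • unitVec θ := by
  set z := Complex.orthonormalBasisOneI.repr.symm x
  have hz : ‖z‖ = ‖x‖ := LinearIsometryEquiv.norm_map _ x
  refine ⟨z.arg + 2 * π, by linarith [Complex.neg_pi_lt_arg z, pi_pos], ?_⟩
  have := unitVec_add_nat_mul_two_pi z.arg 1
  rw [Nat.cast_one, one_mul] at this
  rw [this, ← hz]
  ext i
  fin_cases i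
  · simp [unitVec, Complex.norm_mul_cos_arg, z]
  · simp [unitVec, Complex.norm_mul_sin_arg, z]

section Hexagon

open Fin.NatCast

theorem unitVec_add_mod_six_mul_pi_div_three (c : ℝ) (k : ℕ) :
    unitVec (c + (k % 6 : ℕ) * (π / 3)) = unitVec (c + k * (π / 3)) := by
  conv_rhs => rw [← Nat.mod_add_div k 6, Nat.cast_add, Nat.cast_mul, Nat.cast_ofNat,
    show c + ((k % 6 : ℕ) + 6 * (k / 6 : ℕ)) * (π / 3) =
      c + (k % 6 : ℕ) * (π / 3) + (k / 6 : ℕ) * (2 * π) by ring,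
    unitVec_add_nat_mul_two_pi]

theorem hexNbr_natCast (k : ℕ) : hexNbr k = unitVec (k * (π / 3)) := by
  have := unitVec_add_mod_six_mul_pi_div_three 0 k
  rw [zero_add, zero_add] at this
  exact this

theorem hexVtx_natCast (k : ℕ) : hexVtx k = (1 / √3) • unitVec (π / 6 + k * (π / 3)) := by
  rw [← unitVec_add_mod_six_mul_pi_div_three]
  rfl

theorem inner_hexVtx_hexNbr_natCast (k m : ℕ) :
    ⟪hexVtx k, hexNbr m⟫ = cos (π / 6 + (k - m) * (π / 3)) / √3 := by
  rw [hexVtx_natCast, hexNbr_natCast, real_inner_smul_left, inner_unitVec]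
  ring_nf

theorem cos_le_sqrt_three_div_two_of_cos_three_mul_eq_zero {φ : ℝ} (h : cos (3 * φ) = 0) :
    cos φ ≤ √3 / 2 := by
  rw [cos_three_mul] at h
  have h3 : √3 ^ 2 = 3 := sq_sqrt (by norm_num)
  rcases mul_eq_zero.mp (show cos φ * (4 * cos φ ^ 2 - 3) = 0 by linarith) with h0 | h0
  · rw [h0]; positivity
  · nlinarith [sqrt_nonneg 3]

def hexCell : Set (EuclideanSpace ℝ (Fin 2)) := {x | ∀ i : Fin 6, dist x 0 ≤ dist x (hexNbr i)}

theorem mem_hexCell_iff {v : EuclideanSpace ℝ (Fin 2)} :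
    v ∈ hexCell ↔ ∀ i, ⟪v, hexNbr i⟫ ≤ 1 / 2 := by
  refine forall_congr' fun i => ?_
  rw [dist_zero_le_dist_iff, show hexNbr i = unitVec _ from rfl, norm_unitVec]
  constructor <;> intro h <;> linarith

theorem hexVtx_mem_hexCell (i : Fin 6) : hexVtx i ∈ hexCell := by
  refine mem_hexCell_iff.mpr fun j => ?_
  rw [← Fin.cast_val_eq_self i, ← Fin.cast_val_eq_self j, inner_hexVtx_hexNbr_natCast]
  have hcos : cos (3 * (π / 6 + ((i : ℕ) - (j : ℕ) : ℝ) * (π / 3))) = 0 :=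
    cos_eq_zero_iff.mpr ⟨(i : ℤ) - (j : ℤ), by push_cast; ring⟩
  rw [div_le_iff₀ (by positivity)]
  linarith [cos_le_sqrt_three_div_two_of_cos_three_mul_eq_zero hcos]

theorem exists_hexVtx_inner_ge (x : EuclideanSpace ℝ (Fin 2)) :
    ∃ i, ∀ v ∈ hexCell, ⟪v, x⟫ ≤ ⟪hexVtx i, x⟫ := by
  obtain ⟨θ, hθ, hx⟩ := exists_eq_norm_smul_unitVec x
  set k := ⌊θ / (π / 3)⌋₊
  have hπ : 0 < π / 3 := by positivity
  have hk : k * (π / 3) ≤ θ := (le_div_iff₀ hπ).mp (Nat.floor_le (by positivity))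
  have hk' : θ < (k + 1) * (π / 3) := (div_lt_iff₀ hπ).mp (Nat.lt_floor_add_one _)
  have hcone : sin (π / 3) • unitVec θ =
      sin ((k + 1) * (π / 3) - θ) • hexNbr k +
        sin (θ - k * (π / 3)) • hexNbr (k + 1 : ℕ) := by
    rw [hexNbr_natCast, hexNbr_natCast, Nat.cast_succ, ← sin_sub_smul_unitVec,
      show (k + 1) * (π / 3) - k * (π / 3) = π / 3 by ring]
  have hs : √3 / 2 / √3 = 1 / 2 := by field_simp
  have hw₀ : ⟪hexVtx k, hexNbr k⟫ = 1 / 2 := by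
    rw [inner_hexVtx_hexNbr_natCast, sub_self, zero_mul, add_zero, cos_pi_div_six, hs]
  have hw₁ : ⟪hexVtx k, hexNbr (k + 1 : ℕ)⟫ = 1 / 2 := by
    rw [inner_hexVtx_hexNbr_natCast, show π / 6 + (k - (k + 1 : ℕ) : ℝ) * (π / 3) = -(π / 6) by
      push_cast; ring, cos_neg, cos_pi_div_six, hs]
  refine ⟨k, fun v hv => ?_⟩
  have hle := inner_le_inner_of_eq_smul_add_smul
      (sin_nonneg_of_nonneg_of_le_pi (by linarith) (by linarith))
      (sin_nonneg_of_nonneg_of_le_pi (by linarith) (by linarith))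
      hcone (mem_hexCell_iff.mp hv _) (mem_hexCell_iff.mp hv _) hw₀ hw₁
  rw [real_inner_smul_right, real_inner_smul_right] at hle
  rw [hx, real_inner_smul_right, real_inner_smul_right]
  gcongr
  exact le_of_mul_le_mul_left hle (by rw [sin_pi_div_three]; positivity)

theorem dist_hexVtx_zero (i : Fin 6) : dist (hexVtx i) 0 = 1 / √3 := by
  rw [dist_zero_right, show hexVtx i = (1 / √3) • unitVec _ from rfl, norm_smul, norm_unitVec,
    mul_one, norm_of_nonneg (by positivity)]

end Hexagon

/-- For the hexagonal lattice, the union of disks `closedBall v (dist v 0)` over the hexagonal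
Voronoi cell `R₀` of the origin equals the union of the six disks of radius `1/√3` centered at
the vertices of the hexagon. -/
theorem stmt16 :
    (⋃ v ∈ {x : EuclideanSpace ℝ (Fin 2) | ∀ i : Fin 6, dist x 0 ≤ dist x (hexNbr i)},
        closedBall v (dist v 0)) =
      ⋃ i : Fin 6, closedBall (hexVtx i) (1 / Real.sqrt 3) := by
  have h := biUnion_closedBall_dist_zero_eq_iUnion hexVtx_mem_hexCell exists_hexVtx_inner_ge
  simp only [hexCell, dist_hexVtx_zero] at h
  exact h
end
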